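/- arXiv:1901.07009 — 8 statements merged into one kernel-verified Lean document; each statement's English description precedes it below -/
import Mathlib

section
/- For every t ∈ (e^{−4π²}, 1), one has κ₁(e^{−4π²/(−log t)}) ≤ 64 · e^{−4π²/(−log t)}. -/
open Real

/-- `κ₁(t) = ∑_{j≥1} j·t^j/(1−t^j)`. -/
noncomputable def kappa1 (t : ℝ) : ℝ :=
  ∑' j : ℕ, ((j : ℝ) + 1) * t ^ (j + 1) / (1 - t ^ (j + 1))

lemma kappa1_le_of_small {q : ℝ} (hq0 : 0 < q) (hq : q ≤ 1 / 2) :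
    kappa1 q ≤ 64 * q := by
  have hq1 : q < 1 := lt_of_le_of_lt hq (by norm_num)
  have hpow : ∀ n : ℕ, q ^ (n + 1) ≤ 1 / 2 := fun n =>
    le_trans (pow_le_of_le_one hq0.le hq1.le (Nat.succ_ne_zero n)) hq
  have hterm : ∀ n : ℕ, ((n : ℝ) + 1) * q ^ (n + 1) / (1 - q ^ (n + 1)) ≤
      2 * (((n : ℝ) + 1) * q ^ (n + 1)) := by
    intro n
    have h1 : (1 : ℝ) / 2 ≤ 1 - q ^ (n + 1) := by linarith [hpow n]
    have hnum : 0 ≤ ((n : ℝ) + 1) * q ^ (n + 1) := by positivity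
    rw [div_le_iff₀ (by linarith)]
    nlinarith
  have hterm0 : ∀ n : ℕ, 0 ≤ ((n : ℝ) + 1) * q ^ (n + 1) / (1 - q ^ (n + 1)) := by
    intro n
    have h1 : (1 : ℝ) / 2 ≤ 1 - q ^ (n + 1) := by linarith [hpow n]
    positivity
  -- summability of the dominating series
  have hnorm : ‖q‖ < 1 := by rw [Real.norm_eq_abs, abs_of_pos hq0]; exact hq1
  have hsum0 : Summable (fun n : ℕ => (n : ℝ) * q ^ n) :=
    (hasSum_coe_mul_geometric_of_norm_lt_one hnorm).summable
  have hsum1 : Summable (fun n : ℕ => ((n : ℝ) + 1) * q ^ (n + 1)) := by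
    have := (summable_nat_add_iff (f := fun n : ℕ => (n : ℝ) * q ^ n) 1).2 hsum0
    simpa using this
  have hsum2 : Summable (fun n : ℕ => 2 * (((n : ℝ) + 1) * q ^ (n + 1))) :=
    hsum1.mul_left 2
  have hsumf : Summable (fun n : ℕ => ((n : ℝ) + 1) * q ^ (n + 1) / (1 - q ^ (n + 1))) :=
    Summable.of_nonneg_of_le hterm0 hterm hsum2
  have h1 : kappa1 q ≤ ∑' n : ℕ, 2 * (((n : ℝ) + 1) * q ^ (n + 1)) :=
    Summable.tsum_le_tsum hterm hsumf hsum2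
  have hshift : ∑' n : ℕ, ((n : ℝ) + 1) * q ^ (n + 1) = q / (1 - q) ^ 2 := by
    have h0 : ∑' n : ℕ, (n : ℝ) * q ^ n = q / (1 - q) ^ 2 :=
      tsum_coe_mul_geometric_of_norm_lt_one hnorm
    rw [← h0, Summable.tsum_eq_zero_add hsum0]
    push_cast
    simp
  have h2 : ∑' n : ℕ, 2 * (((n : ℝ) + 1) * q ^ (n + 1)) = 2 * (q / (1 - q) ^ 2) := by
    rw [tsum_mul_left, hshift]
  have h3 : 2 * (q / (1 - q) ^ 2) ≤ 64 * q := by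
    have h4 : (1 / 2 : ℝ) ≤ 1 - q := by linarith
    have h5 : 2 * (q / (1 - q) ^ 2) ≤ 2 * (q / (1 / 2) ^ 2) := by
      gcongr
    calc 2 * (q / (1 - q) ^ 2) ≤ 2 * (q / (1 / 2) ^ 2) := h5
      _ = 8 * q := by ring
      _ ≤ 64 * q := by nlinarith
  calc kappa1 q ≤ ∑' n : ℕ, 2 * (((n : ℝ) + 1) * q ^ (n + 1)) := h1
    _ = 2 * (q / (1 - q) ^ 2) := h2
    _ ≤ 64 * q := h3

/-- For `t ∈ (e^{−4π²}, 1)`, `κ₁(e^{−4π²/(−log t)}) ≤ 64·e^{−4π²/(−log t)}`. -/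
theorem stmt7 (t : ℝ) (ht : t ∈ Set.Ioo (Real.exp (-(4 * Real.pi ^ 2))) 1) :
    kappa1 (Real.exp (-(4 * Real.pi ^ 2) / (-Real.log t))) ≤
      64 * Real.exp (-(4 * Real.pi ^ 2) / (-Real.log t)) := by
  obtain ⟨ht0, ht1⟩ := ht
  have hlogneg : Real.log t < 0 := Real.log_neg (lt_trans (Real.exp_pos _) ht0) ht1
  have hlog : -(4 * Real.pi ^ 2) < Real.log t := by
    have := Real.log_lt_log (Real.exp_pos _) ht0
    rwa [Real.log_exp] at this
  have hpos : 0 < -Real.log t := by linarith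
  have hratio : -(4 * Real.pi ^ 2) / (-Real.log t) ≤ -1 := by
    rw [div_le_iff₀ hpos]
    nlinarith
  have hq : Real.exp (-(4 * Real.pi ^ 2) / (-Real.log t)) ≤ 1 / 2 := by
    calc Real.exp (-(4 * Real.pi ^ 2) / (-Real.log t)) ≤ Real.exp (-1) :=
          Real.exp_le_exp.2 hratio
      _ ≤ 1 / 2 := by
          rw [Real.exp_neg]
          rw [inv_le_comm₀ (Real.exp_pos 1) (by norm_num)]
          calc (1 / 2 : ℝ)⁻¹ = 2 := by norm_num
            _ ≤ Real.exp 1 := by linarith [Real.add_one_le_exp 1]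
  exact kappa1_le_of_small (Real.exp_pos _) hq
end

section
/- For every natural number n ≥ 1 there exists a unique t ∈ (0,1) such that κ₁(t) = n. -/
open Real

/-!
Each summand `(j + 1) · u / (1 - u)` with `u = t ^ (j + 1)` is increasing in `t` on `[0, 1)`, and
the `j = 0` summand strictly so; hence `κ₁` is strictly increasing on `(0, 1)`. Comparing with
`∑ (j + 1) t ^ (j + 1) = t / (1 - t)²` gives `t / (1 - t) ≤ κ₁(t) ≤ t / (1 - t)³`, the same
majorant gives local uniform convergence and so continuity, and the intermediate value theorem
shows that `κ₁` maps `(0, 1)` onto `(0, ∞)`.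
-/

open Set

lemma div_one_sub_lt_div_one_sub {u v : ℝ} (huv : u < v) (hv : v < 1) :
    u / (1 - u) < v / (1 - v) := by
  rw [div_lt_div_iff₀ (by linarith) (by linarith)]
  nlinarith

lemma hasSum_succ_mul_pow_succ {t : ℝ} (ht : |t| < 1) :
    HasSum (fun j : ℕ => ((j : ℝ) + 1) * t ^ (j + 1)) (t / (1 - t) ^ 2) := by
  have h := hasSum_coe_mul_geometric_of_norm_lt_one (𝕜 := ℝ) (r := t) ht
  rw [← hasSum_nat_add_iff' 1] at h
  simpa using h

namespace Kappa1

lemma one_sub_pow_succ_pos {t : ℝ} (h0 : 0 ≤ t) (h1 : t < 1) (j : ℕ) : 0 < 1 - t ^ (j + 1) :=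
  sub_pos.2 (pow_lt_one₀ h0 h1 j.succ_ne_zero)

lemma term_nonneg {t : ℝ} (h0 : 0 ≤ t) (h1 : t < 1) (j : ℕ) :
    0 ≤ ((j : ℝ) + 1) * t ^ (j + 1) / (1 - t ^ (j + 1)) :=
  div_nonneg (by positivity) (one_sub_pow_succ_pos h0 h1 j).le

lemma term_le_term {s t : ℝ} (hs : 0 ≤ s) (hst : s ≤ t) (ht : t < 1) (j : ℕ) :
    ((j : ℝ) + 1) * s ^ (j + 1) / (1 - s ^ (j + 1)) ≤
      ((j : ℝ) + 1) * t ^ (j + 1) / (1 - t ^ (j + 1)) := by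
  have hpow : s ^ (j + 1) ≤ t ^ (j + 1) := pow_le_pow_left₀ hs hst _
  have ht0 : 0 ≤ t := hs.trans hst
  exact div_le_div₀ (by positivity) (by gcongr) (one_sub_pow_succ_pos ht0 ht j) (by linarith)

lemma term_le_majorant {t : ℝ} (h0 : 0 ≤ t) (h1 : t < 1) (j : ℕ) :
    ((j : ℝ) + 1) * t ^ (j + 1) / (1 - t ^ (j + 1)) ≤ ((j : ℝ) + 1) * t ^ (j + 1) / (1 - t) :=
  div_le_div_of_nonneg_left (by positivity) (by linarith)
    (by linarith [pow_le_of_le_one h0 h1.le (n := j + 1) j.succ_ne_zero])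

lemma hasSum_majorant {t : ℝ} (ht : |t| < 1) :
    HasSum (fun j : ℕ => ((j : ℝ) + 1) * t ^ (j + 1) / (1 - t)) (t / (1 - t) ^ 3) := by
  have h := (hasSum_succ_mul_pow_succ ht).div_const (1 - t)
  rwa [div_div, ← pow_succ] at h

lemma summable {t : ℝ} (h0 : 0 ≤ t) (h1 : t < 1) :
    Summable (fun j : ℕ => ((j : ℝ) + 1) * t ^ (j + 1) / (1 - t ^ (j + 1))) :=
  (hasSum_majorant (abs_lt.2 ⟨by linarith, h1⟩)).summable.of_nonneg_of_le (term_nonneg h0 h1)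
    (term_le_majorant h0 h1)

end Kappa1

open Kappa1

lemma div_one_sub_le_kappa1 {t : ℝ} (h0 : 0 ≤ t) (h1 : t < 1) : t / (1 - t) ≤ kappa1 t := by
  simpa [kappa1] using (summable h0 h1).le_tsum 0 fun j _ => term_nonneg h0 h1 j

lemma kappa1_le {t : ℝ} (h0 : 0 ≤ t) (h1 : t < 1) : kappa1 t ≤ t / (1 - t) ^ 3 :=
  hasSum_le (term_le_majorant h0 h1) (summable h0 h1).hasSum
    (hasSum_majorant (abs_lt.2 ⟨by linarith, h1⟩))

lemma strictMonoOn_kappa1 : StrictMonoOn kappa1 (Ioo 0 1) := by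
  intro s hs t ht hst
  refine Summable.tsum_lt_tsum (i := 0) (term_le_term hs.1.le hst.le ht.2) ?_
    (summable hs.1.le hs.2) (summable ht.1.le ht.2)
  simpa using div_one_sub_lt_div_one_sub hst ht.2

lemma continuousOn_kappa1_Icc {r : ℝ} (hr0 : 0 ≤ r) (hr1 : r < 1) :
    ContinuousOn kappa1 (Icc 0 r) := by
  refine continuousOn_tsum (fun j => ?_) (hasSum_majorant (abs_lt.2 ⟨by linarith, hr1⟩)).summable
    fun j x hx => ?_
  · exact ContinuousOn.div (by fun_prop) (by fun_prop)
      fun x hx => (one_sub_pow_succ_pos hx.1 (hx.2.trans_lt hr1) j).ne'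
  · have hx1 : x < 1 := hx.2.trans_lt hr1
    rw [Real.norm_eq_abs, abs_of_nonneg (term_nonneg hx.1 hx1 j)]
    exact (term_le_term hx.1 hx.2 hr1 j).trans (term_le_majorant hr0 hr1 j)

lemma surjOn_kappa1 : SurjOn kappa1 (Ioo 0 1) (Ioi 0) := by
  intro y (hy : 0 < y)
  -- `b / (1 - b) = y` and `a / (1 - a)³ ≤ 8 a = b ≤ y`
  set b := y / (y + 1) with hb
  set a := b / 8 with ha
  have hb0 : 0 < b := by positivity
  have hb1 : b < 1 := (div_lt_one (by linarith)).2 (by linarith)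
  have ha0 : 0 < a := by positivity
  have hκa : kappa1 a ≤ y := calc
    kappa1 a ≤ a / (1 - a) ^ 3 := kappa1_le ha0.le (by linarith)
    _ ≤ 8 * a := by
      rw [div_le_iff₀ (pow_pos (by linarith) 3)]
      nlinarith [pow_le_pow_left₀ (by norm_num) (show 1 / 2 ≤ 1 - a by linarith) 3]
    _ = b := by ring
    _ ≤ y := div_le_self hy.le (by linarith)
  have hκb : y ≤ kappa1 b := calc
    y = b / (1 - b) := by rw [hb]; field_simp; ring
    _ ≤ kappa1 b := div_one_sub_le_kappa1 hb0.le hb1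
  obtain ⟨t, ht, hκt⟩ := intermediate_value_Icc (by linarith)
    ((continuousOn_kappa1_Icc hb0.le hb1).mono (Icc_subset_Icc ha0.le le_rfl)) ⟨hκa, hκb⟩
  exact ⟨t, ⟨ha0.trans_le ht.1, ht.2.trans_lt hb1⟩, hκt⟩

lemma bijOn_kappa1 : BijOn kappa1 (Ioo 0 1) (Ioi 0) :=
  ⟨fun t ht => (div_pos ht.1 (sub_pos.2 ht.2)).trans_le (div_one_sub_le_kappa1 ht.1.le ht.2),
    strictMonoOn_kappa1.injOn, surjOn_kappa1⟩

/-- For every `n ≥ 1` there is a unique `t ∈ (0,1)` with `κ₁(t) = n`. -/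
theorem stmt8 (n : ℕ) (hn : 1 ≤ n) :
    ∃! t : ℝ, t ∈ Set.Ioo (0 : ℝ) 1 ∧ kappa1 t = n := by
  obtain ⟨t, ht, hκ⟩ := bijOn_kappa1.surjOn (show (0 : ℝ) < n by exact_mod_cast hn)
  exact ⟨t, ⟨ht, hκ⟩, fun s hs => bijOn_kappa1.injOn hs.1 ht (hs.2.trans hκ.symm)⟩
end

section
/- For every natural number n ≥ 1, the unique solution t_n ∈ (0,1) of κ₁(t_n) = n satisfies e^{−π/√(6(n − 1/24))} < t_n < 1. -/
open Real

theorem hasSum_coe_add_one_mul_pow_succ {𝕜 : Type*} [NormedField 𝕜] {r : 𝕜} (hr : ‖r‖ < 1) :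
    HasSum (fun n : ℕ ↦ ((n : 𝕜) + 1) * r ^ (n + 1)) (r / (1 - r) ^ 2) := by
  have h := (hasSum_nat_add_iff' (f := fun n : ℕ ↦ (n : 𝕜) * r ^ n) 1).mpr
    (hasSum_coe_mul_geometric_of_norm_lt_one hr)
  simpa only [Nat.cast_add, Nat.cast_one, Finset.range_one, Finset.sum_singleton, Nat.cast_zero,
    zero_mul, sub_zero] using h

theorem exp_neg_div_one_sub_exp_neg_sq_lt {u : ℝ} (hu : 0 < u) :
    exp (-u) / (1 - exp (-u)) ^ 2 < 1 / u ^ 2 := by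
  have hsinh : u < 2 * sinh (u / 2) := by linarith [self_lt_sinh_iff.mpr (half_pos hu)]
  have hsplit : 1 - exp (-u) = exp (-(u / 2)) * (2 * sinh (u / 2)) := by
    rw [sinh_eq, mul_div_cancel₀ _ two_ne_zero, mul_sub, ← exp_add, ← exp_add]
    ring_nf
    rw [exp_zero]
    ring
  have hexp : exp (-u) = exp (-(u / 2)) ^ 2 := by rw [← exp_nat_mul]; ring_nf
  rw [hsplit, hexp, mul_pow, div_mul_cancel_left₀ (by positivity), one_div]
  gcongr

theorem pow_div_one_sub_pow_sq_lt {t : ℝ} (ht0 : 0 < t) (ht1 : t < 1) {m : ℕ} (hm : 0 < m) :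
    t ^ m / (1 - t ^ m) ^ 2 < 1 / (m ^ 2 * log t ^ 2) := by
  have hpos : 0 < m * -log t := mul_pos (by exact_mod_cast hm) (neg_pos.mpr (log_neg ht0 ht1))
  have htm : t ^ m = exp (-(m * -log t)) := by
    rw [mul_neg, neg_neg, exp_nat_mul, exp_log ht0]
  simpa [htm, mul_pow] using exp_neg_div_one_sub_exp_neg_sq_lt hpos

theorem kappa1_eq_tsum {t : ℝ} (ht0 : 0 ≤ t) (ht1 : t < 1) :
    kappa1 t = ∑' k : ℕ, t ^ (k + 1) / (1 - t ^ (k + 1)) ^ 2 := by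
  set F : ℕ → ℕ → ℝ := fun k j ↦ ((j : ℝ) + 1) * (t ^ (k + 1)) ^ (j + 1) with hF
  have hpow_lt : ∀ k : ℕ, t ^ (k + 1) < 1 := fun k ↦ pow_lt_one₀ ht0 ht1 k.succ_ne_zero
  have hsum_row : ∀ k, HasSum (F k) (t ^ (k + 1) / (1 - t ^ (k + 1)) ^ 2) := fun k ↦
    hasSum_coe_add_one_mul_pow_succ (by rw [norm_of_nonneg (by positivity)]; exact hpow_lt k)
  have hsum_col : ∀ j : ℕ,
      HasSum (fun k ↦ F k j) (((j : ℝ) + 1) * t ^ (j + 1) / (1 - t ^ (j + 1))) := by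
    intro j
    have hcol : (fun k ↦ F k j) = fun k ↦ ((j : ℝ) + 1) * t ^ (j + 1) * (t ^ (j + 1)) ^ k := by
      funext k
      simp only [hF, ← pow_mul, mul_assoc, ← pow_add]
      ring_nf
    rw [hcol, div_eq_mul_inv]
    exact (hasSum_geometric_of_lt_one (by positivity) (hpow_lt j)).mul_left _
  have hsum_diag : Summable fun k : ℕ ↦ t ^ (k + 1) / (1 - t ^ (k + 1)) ^ 2 := by
    refine Summable.of_nonneg_of_le (fun k ↦ by positivity) (fun k ↦ ?_)
      (((summable_geometric_of_lt_one ht0 ht1).mul_left t).div_const ((1 - t) ^ 2))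
    rw [← pow_succ']
    have : 1 - t ≤ 1 - t ^ (k + 1) := by
      linarith [pow_le_of_le_one ht0 ht1.le (by omega : k + 1 ≠ 0)]
    gcongr
  have hsum : Summable (Function.uncurry F) :=
    (summable_prod_of_nonneg fun _ ↦ by simp only [Function.uncurry, hF]; positivity).mpr
      ⟨fun k ↦ (hsum_row k).summable, by
        simpa only [Function.uncurry_apply_pair, (hsum_row _).tsum_eq] using hsum_diag⟩
  calc kappa1 t = ∑' (j) (k), F k j := tsum_congr fun j ↦ (hsum_col j).tsum_eq.symm
    _ = ∑' (k) (j), F k j :=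
      hsum.tsum_comm' (fun k ↦ (hsum_row k).summable) fun j ↦ (hsum_col j).summable
    _ = _ := tsum_congr fun k ↦ (hsum_row k).tsum_eq

theorem kappa1_lt_pi_sq_div {t : ℝ} (ht0 : 0 < t) (ht1 : t < 1) :
    kappa1 t < π ^ 2 / (6 * log t ^ 2) := by
  have hzeta : HasSum (fun k : ℕ ↦ 1 / ((k + 1 : ℕ) : ℝ) ^ 2) (π ^ 2 / 6) := by
    simpa using (hasSum_nat_add_iff' (f := fun n : ℕ ↦ 1 / (n : ℝ) ^ 2) 1).mpr hasSum_zeta_two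
  have hmaj := hzeta.div_const (log t ^ 2)
  simp only [div_div] at hmaj
  rw [kappa1_eq_tsum ht0.le ht1, ← hmaj.tsum_eq]
  have hterm := fun k : ℕ ↦ pow_div_one_sub_pow_sq_lt ht0 ht1 k.succ_pos
  refine Summable.tsum_lt_tsum_of_nonneg (fun k ↦ ?_) (fun k ↦ (hterm k).le) (hterm 0)
    hmaj.summable
  have : t ^ (k + 1) < 1 := pow_lt_one₀ ht0.le ht1 k.succ_ne_zero
  have : 0 < 1 - t ^ (k + 1) := by linarith
  positivity

/-- The solution `t_n` of `κ₁(t_n) = n` satisfies `e^{−π/√(6(n−1/24))} < t_n < 1`. -/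
theorem stmt9 (n : ℕ) (hn : 1 ≤ n) (t : ℝ) (ht : t ∈ Set.Ioo (0 : ℝ) 1)
    (htn : kappa1 t = n) :
    Real.exp (-Real.pi / Real.sqrt (6 * ((n : ℝ) - 1 / 24))) < t ∧ t < 1 := by
  obtain ⟨ht0, ht1⟩ := ht
  refine ⟨?_, ht1⟩
  have hn' : (1 : ℝ) ≤ n := by exact_mod_cast hn
  have hc : 0 < 6 * ((n : ℝ) - 1 / 24) := by linarith
  have hlog_sq : 0 < log t ^ 2 := sq_pos_of_neg (log_neg ht0 ht1)
  have hκ : n * (6 * log t ^ 2) < π ^ 2 := by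
    rw [← lt_div_iff₀ (by positivity), ← htn]
    exact kappa1_lt_pi_sq_div ht0 ht1
  have hlog : log t ^ 2 < (π / √(6 * ((n : ℝ) - 1 / 24))) ^ 2 := by
    rw [div_pow, sq_sqrt hc.le, lt_div_iff₀ hc]
    linarith
  rw [neg_div, ← exp_log ht0, exp_lt_exp]
  exact (abs_lt_of_sq_lt_sq' hlog (by positivity)).1
end

section
/- For every integer ℓ ≥ 1, the coefficient D_ℓ satisfies 0 < D_ℓ < 2 · 3^{ℓ−1}. -/
open Real

/-- `D_ℓ = (−1)^{ℓ+1}·((ℓ+1)/4^ℓ)·∑_{k=0}^{ℓ+1} (−1)^k·2^k·C(2ℓ,k)/(ℓ+1−k)!`. -/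
noncomputable def Dcoef (l : ℕ) : ℝ :=
  (-1) ^ (l + 1) * (((l : ℝ) + 1) / 4 ^ l) *
    ∑ k ∈ Finset.range (l + 2),
      (-1) ^ k * 2 ^ k * (Nat.choose (2 * l) k : ℝ) / (Nat.factorial (l + 1 - k) : ℝ)

/-!
Reversing the order of summation (`j = ℓ + 1 - k`) writes `D_ℓ` as `(ℓ + 1) / 4^ℓ` times an
alternating sum `∑ (-1)^j b_j` whose terms `b_j = 2^k C(2ℓ, k) / (ℓ + 1 - k)!` decrease in `j`.
Such a sum lies between `b₀ - b₁` and `b₀ - b₁ + b₂`, and these three terms are explicit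
multiples of `c = C(2ℓ, ℓ)`, giving `2^ℓ c (ℓ - 1) ≤ 4^ℓ D_ℓ ≤ 2^(ℓ-2) c (5ℓ - 4)`.
The bound `2c ≤ 4^ℓ` reduces the upper estimate to `(5ℓ - 4) 2^ℓ < 16 · 3^(ℓ-1)`;
for `ℓ = 1` the lower estimate degenerates and `D₁ = 1/4` is computed directly.
-/

open Finset

theorem Antitone.alternating_sum_mem_Icc {α : Type*} [CommRing α] [LinearOrder α]
    [IsStrictOrderedRing α] {b : ℕ → α} (hb : Antitone b) (h0 : ∀ j, 0 ≤ b j) (n : ℕ) :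
    ∑ j ∈ range n, (-1) ^ j * b j ∈ Set.Icc 0 (b 0) := by
  induction n generalizing b with
  | zero => simpa using h0 0
  | succ n ih =>
    obtain ⟨hlo, hhi⟩ := ih (b := fun j => b (j + 1)) (fun i j h => hb (by omega)) (fun j => h0 _)
    have h10 : b 1 ≤ b 0 := hb zero_le_one
    rw [sum_range_succ']
    simp only [pow_succ, mul_neg_one, neg_mul, sum_neg_distrib, pow_zero, one_mul]
    constructor <;> linarith [h0 0]

theorem Antitone.alternating_sum_add_two_mem_Icc {α : Type*} [CommRing α] [LinearOrder α]
    [IsStrictOrderedRing α] {b : ℕ → α} (hb : Antitone b) (h0 : ∀ j, 0 ≤ b j)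
    (n : ℕ) : ∑ j ∈ range (n + 2), (-1) ^ j * b j ∈ Set.Icc (b 0 - b 1) (b 0 - b 1 + b 2) := by
  obtain ⟨hlo, hhi⟩ := (show Antitone fun j => b (j + 2) from fun i j h => hb (by omega))
    |>.alternating_sum_mem_Icc (fun j => h0 _) n
  rw [sum_range_succ', sum_range_succ']
  simp only [pow_succ, pow_zero, mul_neg, mul_one, neg_neg, neg_mul, one_mul, zero_add] at hlo hhi ⊢
  constructor <;> linarith

theorem Nat.two_mul_centralBinom_le_four_pow {n : ℕ} (hn : n ≠ 0) :
    2 * n.centralBinom ≤ 4 ^ n := by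
  obtain ⟨n, rfl⟩ := Nat.exists_eq_succ_of_ne_zero hn
  have h : (n + 1).centralBinom = 2 * (2 * n + 1).choose n := by
    rw [Nat.centralBinom_eq_two_mul_choose, show 2 * (n + 1) = 2 * n + 1 + 1 by ring,
      Nat.choose_succ_succ, Nat.choose_symm_half]
    ring
  rw [h, pow_succ]
  linarith [Nat.choose_middle_le_pow n]

theorem five_mul_add_one_mul_two_pow_lt (n : ℕ) : (5 * n + 1) * 2 ^ n < 8 * 3 ^ n := by
  rcases lt_or_ge n 2 with h | h
  · interval_cases n <;> norm_num
  · induction n, h using Nat.le_induction with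
    | base => norm_num
    | succ n hn ih =>
      calc (5 * (n + 1) + 1) * 2 ^ (n + 1) = (5 * (n + 1) + 1) * 2 * 2 ^ n := by ring
        _ ≤ 3 * (5 * n + 1) * 2 ^ n := Nat.mul_le_mul_right _ (by omega)
        _ < 3 * (8 * 3 ^ n) := by rw [mul_assoc]; gcongr
        _ = 8 * 3 ^ (n + 1) := by ring

theorem Nat.choose_le_two_mul_choose_succ_mul {l k : ℕ} (hl : 1 ≤ l) (hk : k ≤ l) :
    (2 * l).choose k ≤ 2 * (2 * l).choose (k + 1) * (l - k + 1) := by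
  have hlin : k + 1 ≤ 2 * (2 * l - k) * (l - k + 1) :=
    (show k + 1 ≤ 2 * (2 * l - k) by omega).trans (Nat.le_mul_of_pos_right _ (by omega))
  refine Nat.le_of_mul_le_mul_right ?_ (Nat.succ_pos k)
  calc (2 * l).choose k * (k + 1) ≤ (2 * l).choose k * (2 * (2 * l - k) * (l - k + 1)) :=
        Nat.mul_le_mul_left _ hlin
    _ = 2 * (2 * l).choose (k + 1) * (l - k + 1) * (k + 1) := by
        rw [show 2 * (2 * l).choose (k + 1) * (l - k + 1) * (k + 1)
            = 2 * ((2 * l).choose (k + 1) * (k + 1)) * (l - k + 1) by ring,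
          Nat.choose_succ_right_eq]
        ring

theorem Nat.choose_two_mul_succ_mul_succ (l : ℕ) :
    (2 * l).choose (l + 1) * (l + 1) = l.centralBinom * l := by
  rw [Nat.choose_succ_right_eq, Nat.centralBinom_eq_two_mul_choose, Nat.two_mul, Nat.add_sub_cancel]

noncomputable def Dterm (l k : ℕ) : ℝ :=
  2 ^ k * ((2 * l).choose k : ℝ) / ((l + 1 - k).factorial : ℝ)

theorem Dterm_nonneg (l k : ℕ) : 0 ≤ Dterm l k := by
  unfold Dterm; positivity

theorem Dcoef_eq_sum_Dterm (l : ℕ) :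
    Dcoef l = (l + 1) / 4 ^ l * ∑ j ∈ range (l + 2), (-1) ^ j * Dterm l (l + 1 - j) := by
  rw [Dcoef, ← sum_range_reflect, mul_comm ((-1 : ℝ) ^ (l + 1)), mul_assoc, mul_sum]
  congr 1
  refine sum_congr rfl fun j hj => ?_
  have hj : j ≤ l + 1 := Nat.lt_succ_iff.mp (mem_range.mp hj)
  have hsign : (-1 : ℝ) ^ (l + 1) * (-1) ^ (l + 1 - j) = (-1) ^ j := by
    rw [← pow_add, show l + 1 + (l + 1 - j) = j + 2 * (l + 1 - j) by omega, pow_add, pow_mul]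
    simp
  rw [Dterm, ← hsign, show l + 2 - 1 - j = l + 1 - j by omega]
  ring

theorem Dterm_le_Dterm_succ {l k : ℕ} (hl : 1 ≤ l) (hk : k ≤ l) :
    Dterm l k ≤ Dterm l (k + 1) := by
  have h : ((2 * l).choose k : ℝ) ≤ 2 * (2 * l).choose (k + 1) * ((l - k : ℕ) + 1) := by
    exact_mod_cast Nat.choose_le_two_mul_choose_succ_mul hl hk
  rw [Dterm, Dterm, show l + 1 - k = (l - k) + 1 by omega, show l + 1 - (k + 1) = l - k by omega,
    Nat.factorial_succ, div_le_div_iff₀ (by positivity) (by positivity)]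
  push_cast
  calc 2 ^ k * ((2 * l).choose k : ℝ) * (l - k).factorial
      ≤ 2 ^ k * (2 * (2 * l).choose (k + 1) * ((l - k : ℕ) + 1)) * (l - k).factorial := by
        gcongr
    _ = _ := by ring

theorem antitone_Dterm_reflect {l : ℕ} (hl : 1 ≤ l) : Antitone fun j => Dterm l (l + 1 - j) := by
  refine antitone_nat_of_succ_le fun j => ?_
  rcases le_or_gt j l with hj | hj
  · rw [show l + 1 - j = l + 1 - (j + 1) + 1 by omega]
    exact Dterm_le_Dterm_succ hl (by omega)
  · rw [show l + 1 - j = 0 by omega, show l + 1 - (j + 1) = 0 by omega]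

theorem succ_mul_Dterm_succ_self (l : ℕ) :
    (l + 1) * Dterm l (l + 1) = 2 ^ (l + 1) * l * l.centralBinom := by
  have h : ((2 * l).choose (l + 1) : ℝ) * (l + 1) = l.centralBinom * l := by
    exact_mod_cast Nat.choose_two_mul_succ_mul_succ l
  rw [Dterm, Nat.sub_self, Nat.factorial_zero, Nat.cast_one, div_one]
  linear_combination 2 ^ (l + 1) * h

theorem Dterm_self (l : ℕ) : Dterm l l = 2 ^ l * l.centralBinom := by
  rw [Dterm, Nat.add_sub_cancel_left, Nat.factorial_one, Nat.cast_one, div_one,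
    Nat.centralBinom_eq_two_mul_choose]

theorem four_mul_succ_mul_Dterm_pred {l : ℕ} (hl : 1 ≤ l) :
    4 * (l + 1) * Dterm l (l - 1) = 2 ^ l * l * l.centralBinom := by
  obtain ⟨n, rfl⟩ := Nat.exists_eq_add_of_le' hl
  have h : ((2 * (n + 1)).choose (n + 1 + 1) : ℝ) * (n + 1 + 1)
      = (n + 1).centralBinom * (n + 1) := by
    exact_mod_cast Nat.choose_two_mul_succ_mul_succ (n + 1)
  rw [Dterm, Nat.add_sub_cancel, show n + 1 + 1 - n = 2 by omega,
    Nat.choose_symm_of_eq_add (show 2 * (n + 1) = n + (n + 1 + 1) by ring)]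
  push_cast
  linear_combination 2 ^ (n + 1) * h

theorem Dcoef_bounds {l : ℕ} (hl : 1 ≤ l) :
    2 ^ l * l.centralBinom * ((l : ℝ) - 1) ≤ 4 ^ l * Dcoef l ∧
      4 * 4 ^ l * Dcoef l ≤ 2 ^ l * l.centralBinom * (5 * l - 4) := by
  obtain ⟨hlo, hhi⟩ :=
    (antitone_Dterm_reflect hl).alternating_sum_add_two_mem_Icc (fun j => Dterm_nonneg _ _) l
  simp only [Nat.sub_zero, Nat.add_sub_cancel, show l + 1 - 2 = l - 1 by omega, Dterm_self]
    at hlo hhi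
  have hD : 4 ^ l * Dcoef l = (l + 1) * ∑ j ∈ range (l + 2), (-1) ^ j * Dterm l (l + 1 - j) := by
    rw [Dcoef_eq_sum_Dterm]
    field_simp
  have hl0 : (0 : ℝ) ≤ l + 1 := by positivity
  have e0 := succ_mul_Dterm_succ_self l
  rw [pow_succ] at e0
  have e2 := four_mul_succ_mul_Dterm_pred hl
  constructor
  · linarith [mul_le_mul_of_nonneg_left hlo hl0]
  · linarith [mul_le_mul_of_nonneg_left hhi hl0]

theorem Dcoef_pos {l : ℕ} (hl : 1 ≤ l) : 0 < Dcoef l := by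
  rcases hl.eq_or_lt with rfl | hl2
  · norm_num [Dcoef, Finset.sum_range_succ]
  · have hc : (0 : ℝ) < l.centralBinom := by exact_mod_cast l.centralBinom_pos
    have hl2' : (1 : ℝ) < l := by exact_mod_cast hl2
    have hlo : (0 : ℝ) < 2 ^ l * l.centralBinom * (l - 1) := by positivity
    exact pos_of_mul_pos_right (hlo.trans_le (Dcoef_bounds hl).1) (by positivity)

theorem Dcoef_lt_two_mul_three_pow {l : ℕ} (hl : 1 ≤ l) : Dcoef l < 2 * 3 ^ (l - 1) := by
  obtain ⟨n, rfl⟩ := Nat.exists_eq_add_of_le' hl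
  have hhi := (Dcoef_bounds hl).2
  have hcb : (2 * (n + 1).centralBinom : ℝ) ≤ 4 ^ (n + 1) := by
    exact_mod_cast Nat.two_mul_centralBinom_le_four_pow n.succ_ne_zero
  have hnum : ((5 * n + 1) * 2 ^ n : ℝ) < 8 * 3 ^ n := by
    exact_mod_cast five_mul_add_one_mul_two_pow_lt n
  rw [Nat.add_sub_cancel]
  push_cast at hhi
  rw [pow_succ (2 : ℝ)] at hhi
  have key : 4 ^ (n + 1) * (4 * Dcoef (n + 1)) < 4 ^ (n + 1) * (8 * 3 ^ n) := by
    linarith [mul_le_mul_of_nonneg_left hcb (by positivity : (0 : ℝ) ≤ 2 ^ n * (5 * n + 1)),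
      mul_lt_mul_of_pos_left hnum (by positivity : (0 : ℝ) < 4 ^ (n + 1))]
  linarith [lt_of_mul_lt_mul_left key (by positivity)]

/-- `0 < D_ℓ < 2·3^{ℓ−1}` for every `ℓ ≥ 1`. -/
theorem stmt14 (l : ℕ) (hl : 1 ≤ l) :
    0 < Dcoef l ∧ Dcoef l < 2 * 3 ^ (l - 1) :=
  ⟨Dcoef_pos hl, Dcoef_lt_two_mul_three_pow hl⟩
end

section
/- For every integer ℓ ≥ 1, the 2ℓ-th derivative at x = 0 of the function x ↦ e^{x/2}·(1−x)^{ℓ+1} equals ((ℓ+1)!/4^ℓ) · Σ_{k=0}^{ℓ+1} (−1)^k · 2^k · C(2ℓ,k) / (ℓ+1−k)!; consequently D_ℓ = (−1)^{ℓ+1} · J_ℓ / ℓ!, where J_ℓ denotes this 2ℓ-th derivative. -/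
open Real

/-!
By the Leibniz rule, the `n`-th derivative of `e^{x/2} (1 - x)^m` at `0` is
`∑ₖ C(n,k) (1/2)^{n-k} (-1)^k m(m-1)⋯(m-k+1)`. For `n = 2ℓ`, `m = ℓ + 1` the falling factorial is
`(ℓ+1)!/(ℓ+1-k)!` and `(1/2)^{2ℓ-k} = 2^k/4^ℓ`, which gives the closed form; `D_ℓ` is the same
sum with `(ℓ+1)/4^ℓ = ((ℓ+1)!/4^ℓ)/ℓ!` in front.
-/

open Finset Nat

theorem iteratedDeriv_exp_div_two (n : ℕ) (x : ℝ) :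
    iteratedDeriv n (fun x : ℝ => exp (x / 2)) x = (1 / 2) ^ n * exp (x / 2) := by
  simp_rw [div_eq_inv_mul, iteratedDeriv_exp_const_mul, mul_one]

theorem iteratedDeriv_const_sub_pow (a : ℝ) (m n : ℕ) (x : ℝ) :
    iteratedDeriv n (fun x : ℝ => (a - x) ^ m) x =
      (-1) ^ n * m.descFactorial n * (a - x) ^ (m - n) := by
  rw [iteratedDeriv_comp_const_sub n (· ^ m)]
  simp [mul_assoc]

theorem iteratedDeriv_exp_div_two_mul_one_sub_pow_zero (m n : ℕ) :
    iteratedDeriv n (fun x : ℝ => exp (x / 2) * (1 - x) ^ m) 0 =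
      ∑ k ∈ range (n + 1),
        (n.choose k : ℝ) * ((-1) ^ k * m.descFactorial k) * (1 / 2) ^ (n - k) := by
  simp_rw [mul_comm (exp _)]
  rw [iteratedDeriv_fun_mul (by fun_prop) (by fun_prop)]
  simp [iteratedDeriv_const_sub_pow, iteratedDeriv_exp_div_two]

theorem sum_range_eq_sum_range_of_eq_zero {M : Type*} [AddCommMonoid M] {f : ℕ → M}
    {K N N' : ℕ} (hf : ∀ k ≥ K, f k = 0) (hN : K ≤ N) (hN' : K ≤ N') :
    ∑ k ∈ range N, f k = ∑ k ∈ range N', f k := by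
  rw [eventually_constant_sum hf hN, eventually_constant_sum hf hN']

theorem choose_mul_descFactorial_mul_half_pow {n m k : ℕ} (hk : k ≤ m) :
    (n.choose k : ℝ) * ((-1) ^ k * m.descFactorial k) * (1 / 2) ^ (n - k) =
      m ! / 2 ^ n * ((-1) ^ k * 2 ^ k * n.choose k / (m - k)!) := by
  rcases le_or_gt k n with hkn | hnk
  · have hfact : ((m - k)! : ℝ) * m.descFactorial k = m ! := by
      exact_mod_cast factorial_mul_descFactorial hk
    have htwo : (2 : ℝ) ^ (n - k) * 2 ^ k = 2 ^ n := by
      rw [← pow_add, Nat.sub_add_cancel hkn]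
    rw [← hfact, ← htwo, one_div, inv_pow]
    field_simp
  · simp [choose_eq_zero_of_lt hnk]

theorem stmt15_general (l : ℕ) :
    iteratedDeriv (2 * l) (fun x : ℝ => Real.exp (x / 2) * (1 - x) ^ (l + 1)) 0 =
        (Nat.factorial (l + 1) : ℝ) / 4 ^ l *
          ∑ k ∈ Finset.range (l + 2),
            (-1) ^ k * 2 ^ k * (Nat.choose (2 * l) k : ℝ) / (Nat.factorial (l + 1 - k) : ℝ) ∧
      Dcoef l =
        (-1) ^ (l + 1) *
            iteratedDeriv (2 * l) (fun x : ℝ => Real.exp (x / 2) * (1 - x) ^ (l + 1)) 0 /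
          (Nat.factorial l : ℝ) := by
  have hJ : iteratedDeriv (2 * l) (fun x : ℝ => exp (x / 2) * (1 - x) ^ (l + 1)) 0 =
      ((l + 1)! : ℝ) / 4 ^ l *
        ∑ k ∈ range (l + 2), (-1) ^ k * 2 ^ k * ((2 * l).choose k : ℝ) / (l + 1 - k)! := by
    rw [iteratedDeriv_exp_div_two_mul_one_sub_pow_zero,
      sum_range_eq_sum_range_of_eq_zero (K := min (2 * l) (l + 1) + 1) (N' := l + 2) _
        (by omega) (by omega),
      show (4 : ℝ) ^ l = 2 ^ (2 * l) by rw [pow_mul]; norm_num, mul_sum]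
    · refine sum_congr rfl fun k hk => choose_mul_descFactorial_mul_half_pow ?_
      rw [mem_range] at hk
      omega
    · intro k hk
      rcases Nat.lt_or_ge (2 * l) k with h | h
      · simp [choose_eq_zero_of_lt h]
      · simp [descFactorial_eq_zero_iff_lt.mpr (show l + 1 < k by omega)]
  refine ⟨hJ, ?_⟩
  rw [hJ, Dcoef, factorial_succ]
  push_cast
  field_simp

/-- The `2ℓ`-th derivative of `x ↦ e^{x/2}(1−x)^{ℓ+1}` at `0` equals
`((ℓ+1)!/4^ℓ)·∑_{k=0}^{ℓ+1}(−1)^k 2^k C(2ℓ,k)/(ℓ+1−k)!`, and `D_ℓ = (−1)^{ℓ+1} J_ℓ/ℓ!`. -/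
theorem stmt15 (l : ℕ) (hl : 1 ≤ l) :
    iteratedDeriv (2 * l) (fun x : ℝ => Real.exp (x / 2) * (1 - x) ^ (l + 1)) 0 =
        (Nat.factorial (l + 1) : ℝ) / 4 ^ l *
          ∑ k ∈ Finset.range (l + 2),
            (-1) ^ k * 2 ^ k * (Nat.choose (2 * l) k : ℝ) / (Nat.factorial (l + 1 - k) : ℝ) ∧
      Dcoef l =
        (-1) ^ (l + 1) *
            iteratedDeriv (2 * l) (fun x : ℝ => Real.exp (x / 2) * (1 - x) ^ (l + 1)) 0 /
          (Nat.factorial l : ℝ) :=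
  stmt15_general l
end

section
/- For every integer j ≥ 1 and every t ∈ (0,1), κ_j(t) = Σ_{ℓ≥1} ℓ^{j−1} · A_j(t^ℓ) / (1 − t^ℓ)^{j+1}, and this series converges absolutely. -/
open Real

/-- The cumulants `κ_j(t)`, defined recursively by `κ_{j+1}(t) = t·κ_j'(t)`. -/
noncomputable def kappa : ℕ → ℝ → ℝ
  | 0 => fun _ => 0
  | 1 => kappa1
  | n + 2 => fun t => t * deriv (kappa (n + 1)) t

/-- The Eulerian polynomials, via `A₀ = 1`, `A_{j+1} = t(1−t)A_j' + (j+1)tA_j`. -/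
noncomputable def eulerianPoly : ℕ → Polynomial ℝ
  | 0 => 1
  | j + 1 => Polynomial.X * (1 - Polynomial.X) * Polynomial.derivative (eulerianPoly j)
      + ((j : ℝ) + 1) • (Polynomial.X * eulerianPoly j)

/-!
Write `F_j(y) = A_j(y) / (1 - y) ^ (j + 1)`. The Eulerian recurrence is exactly the identity
`y F_j'(y) = F_{j+1}(y)`, so applying `t d/dt` termwise to `∑ ℓ ^ (j - 1) F_j(t ^ ℓ)` gives the
series for `κ_{j+1}`. Termwise differentiation is legitimate because `A_j(0) = 0` for `j ≥ 1`:
then `|F_j(y)| ≤ C y` on `[0, r]`, `r < 1`, so the `ℓ`-th differentiated term is `O(ℓ ^ j r ^ ℓ)`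
uniformly on `(0, r)`.
The base case `j = 1` is a Lambert series: expanding `t^ℓ / (1 - t^ℓ)` and `t^ℓ / (1 - t^ℓ)^2`
as power series, both sides are iterated sums of the nonnegative double series
`k t ^ (k ℓ)`, in the two orders.
-/

open Polynomial Set Filter Topology

theorem pow_succ_mem_Ioo_zero_one {t : ℝ} (ht : t ∈ Ioo 0 1) (l : ℕ) :
    t ^ (l + 1) ∈ Ioo 0 1 :=
  ⟨pow_pos ht.1 _, pow_lt_one₀ ht.1.le ht.2 (Nat.succ_ne_zero l)⟩

theorem eulerianPoly_one : eulerianPoly 1 = X := by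
  simp [eulerianPoly]

theorem X_dvd_eulerianPoly {j : ℕ} (hj : j ≠ 0) : X ∣ eulerianPoly j := by
  obtain ⟨n, rfl⟩ := Nat.exists_eq_succ_of_ne_zero hj
  rw [eulerianPoly, smul_eq_C_mul]
  exact dvd_add (dvd_mul_of_dvd_left (dvd_mul_right _ _) _)
    (dvd_mul_of_dvd_right (dvd_mul_right _ _) _)

theorem summable_succ_pow_mul_geometric {𝕜 : Type*} [NormedField 𝕜] [CompleteSpace 𝕜]
    (k : ℕ) {r : 𝕜} (hr : ‖r‖ < 1) : Summable fun n : ℕ => ((n : 𝕜) + 1) ^ k * r ^ n := by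
  simp_rw [add_pow, one_pow, mul_one, Finset.sum_mul]
  refine summable_sum fun m _ => ?_
  simpa [mul_right_comm] using
    (summable_pow_mul_geometric_of_norm_lt_one m hr).mul_right (k.choose m : 𝕜)

/-- For `|x| < 1` this is `∑_{k ≥ 0} k ^ j x ^ k`. -/
noncomputable def eulerianFrac (j : ℕ) (x : ℝ) : ℝ :=
  (eulerianPoly j).eval x / (1 - x) ^ (j + 1)

theorem hasDerivAt_eulerianFrac (j : ℕ) {x : ℝ} (hx0 : x ≠ 0) (hx1 : x ≠ 1) :
    HasDerivAt (eulerianFrac j) (eulerianFrac (j + 1) x / x) x := by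
  have h1x : 1 - x ≠ 0 := sub_ne_zero.2 (Ne.symm hx1)
  have hden : HasDerivAt (fun y => (1 - y) ^ (j + 1)) (-(((j : ℝ) + 1) * (1 - x) ^ j)) x :=
    ((hasDerivAt_id x).const_sub 1).pow (j + 1) |>.congr_deriv (by simp)
  refine ((eulerianPoly j).hasDerivAt x |>.div hden (pow_ne_zero _ h1x)).congr_deriv ?_
  simp only [eulerianFrac, eulerianPoly, eval_add, eval_mul, eval_smul, eval_X, eval_sub,
    eval_one, smul_eq_mul]
  field_simp
  ring

theorem exists_abs_eulerianFrac_le {j : ℕ} (hj : j ≠ 0) {r : ℝ} (hr : r < 1) :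
    ∃ C, 0 ≤ C ∧ ∀ x ∈ Icc 0 r, |eulerianFrac j x| ≤ C * x := by
  obtain ⟨Q, hQ⟩ := X_dvd_eulerianPoly hj
  have hcont : ContinuousOn (fun x => Q.eval x / (1 - x) ^ (j + 1)) (Icc 0 r) :=
    Q.continuous.continuousOn.div (by fun_prop) fun x hx =>
      pow_ne_zero _ (sub_ne_zero.2 (by linarith [hx.2]))
  obtain ⟨C, hC⟩ := isCompact_Icc.exists_bound_of_continuousOn hcont
  refine ⟨max C 0, le_max_right _ _, fun x hx => ?_⟩
  have hfac : eulerianFrac j x = x * (Q.eval x / (1 - x) ^ (j + 1)) := by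
    rw [eulerianFrac, hQ, eval_mul, eval_X, mul_div_assoc]
  rw [hfac, abs_mul, abs_of_nonneg hx.1, mul_comm]
  exact mul_le_mul_of_nonneg_right ((hC x hx).trans (le_max_left _ _)) hx.1

/-- The `l`-th term of the series for `κ_{n+1}` (indexed by `n = j - 1`). -/
noncomputable def kappaTerm (n l : ℕ) (t : ℝ) : ℝ :=
  ((l : ℝ) + 1) ^ n * eulerianFrac (n + 1) (t ^ (l + 1))

theorem hasDerivAt_kappaTerm (n l : ℕ) {t : ℝ} (ht : t ∈ Ioo 0 1) :
    HasDerivAt (kappaTerm n l) (kappaTerm (n + 1) l t / t) t := by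
  have htl := pow_succ_mem_Ioo_zero_one ht l
  have h := ((hasDerivAt_eulerianFrac (n + 1) htl.1.ne' htl.2.ne).comp t
    (h := fun s => s ^ (l + 1)) (hasDerivAt_pow (l + 1) t)).const_mul (((l : ℝ) + 1) ^ n)
  refine h.congr_deriv ?_
  have ht0 := ht.1.ne'
  simp only [kappaTerm, Nat.add_sub_cancel]
  push_cast
  field_simp
  ring

theorem abs_kappaTerm_le {n : ℕ} {r C : ℝ} (hr : r ≤ 1)
    (hC : ∀ x ∈ Icc 0 r, |eulerianFrac (n + 1) x| ≤ C * x) (l : ℕ) {t : ℝ} (ht : t ∈ Icc 0 r) :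
    |kappaTerm n l t| ≤ C * t * (((l : ℝ) + 1) ^ n * t ^ l) := by
  have htl : t ^ (l + 1) ≤ t := pow_le_of_le_one ht.1 (ht.2.trans hr) (Nat.succ_ne_zero l)
  have h := hC (t ^ (l + 1)) ⟨pow_nonneg ht.1 _, htl.trans ht.2⟩
  rw [kappaTerm, abs_mul, abs_of_nonneg (by positivity)]
  calc ((l : ℝ) + 1) ^ n * |eulerianFrac (n + 1) (t ^ (l + 1))|
      ≤ ((l : ℝ) + 1) ^ n * (C * t ^ (l + 1)) := by gcongr
    _ = C * t * (((l : ℝ) + 1) ^ n * t ^ l) := by ring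

theorem summable_abs_kappaTerm (n : ℕ) {t : ℝ} (ht : t ∈ Ioo 0 1) :
    Summable fun l => |kappaTerm n l t| := by
  obtain ⟨C, -, hC⟩ := exists_abs_eulerianFrac_le n.succ_ne_zero ht.2
  have hmaj := (summable_succ_pow_mul_geometric n (r := t) (by
    rw [Real.norm_of_nonneg ht.1.le]; exact ht.2)).mul_left (C * t)
  exact hmaj.of_nonneg_of_le (fun _ => abs_nonneg _)
    fun l => abs_kappaTerm_le ht.2.le hC l ⟨ht.1.le, le_rfl⟩

theorem hasDerivAt_tsum_kappaTerm (n : ℕ) {t : ℝ} (ht : t ∈ Ioo 0 1) :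
    HasDerivAt (fun s => ∑' l, kappaTerm n l s) (∑' l, kappaTerm (n + 1) l t / t) t := by
  obtain ⟨r, htr, hr⟩ := exists_between ht.2
  replace htr : t ∈ Ioo 0 r := ⟨ht.1, htr⟩
  have hsub : Ioo 0 r ⊆ Ioo 0 1 := Ioo_subset_Ioo_right hr.le
  obtain ⟨C, hC0, hC⟩ := exists_abs_eulerianFrac_le (n + 1).succ_ne_zero hr
  have hmaj := (summable_succ_pow_mul_geometric (n + 1) (r := r) (by
    rw [Real.norm_of_nonneg (ht.1.trans htr.2).le]; exact hr)).mul_left C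
  refine hasDerivAt_tsum_of_isPreconnected (g' := fun l y => kappaTerm (n + 1) l y / y) hmaj
    isOpen_Ioo isPreconnected_Ioo (fun l y hy => hasDerivAt_kappaTerm n l (hsub hy))
    (fun l y hy => ?_) htr
    (summable_abs_kappaTerm n ht).of_abs htr
  rw [Real.norm_eq_abs, abs_div, abs_of_pos hy.1, div_le_iff₀ hy.1]
  calc |kappaTerm (n + 1) l y| ≤ C * y * (((l : ℝ) + 1) ^ (n + 1) * y ^ l) :=
        abs_kappaTerm_le hr.le hC l ⟨hy.1.le, hy.2.le⟩
    _ ≤ C * y * (((l : ℝ) + 1) ^ (n + 1) * r ^ l) := by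
        have := hy.1.le; have := hy.2.le; gcongr
    _ = C * (((l : ℝ) + 1) ^ (n + 1) * r ^ l) * y := by ring

theorem hasSum_succ_mul_pow_succ_s16 {𝕜 : Type*} [NormedField 𝕜] [CompleteSpace 𝕜] {x : 𝕜}
    (hx : ‖x‖ < 1) : HasSum (fun k : ℕ => ((k : 𝕜) + 1) * x ^ (k + 1)) (x / (1 - x) ^ 2) := by
  simpa using (hasSum_nat_add_iff' (f := fun n : ℕ => (n : 𝕜) * x ^ n) 1).2
    (by simpa using hasSum_coe_mul_geometric_of_norm_lt_one hx)

theorem kappa1_eq_tsum_kappaTerm {t : ℝ} (ht : t ∈ Ioo 0 1) :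
    kappa1 t = ∑' l, kappaTerm 0 l t := by
  have hpow := pow_succ_mem_Ioo_zero_one ht
  let a : ℕ → ℕ → ℝ := fun l k => ((k : ℝ) + 1) * (t ^ (l + 1)) ^ (k + 1)
  have hinner : ∀ l, HasSum (a l) (kappaTerm 0 l t) := fun l => by
    have h := hasSum_succ_mul_pow_succ_s16 (x := t ^ (l + 1))
      (by rw [Real.norm_of_nonneg (hpow l).1.le]; exact (hpow l).2)
    rwa [kappaTerm, eulerianFrac, eulerianPoly_one, eval_X, pow_zero, one_mul]
  have houter : ∀ k, HasSum (fun l => a l k)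
      (((k : ℝ) + 1) * t ^ (k + 1) / (1 - t ^ (k + 1))) := fun k => by
    have h := ((hasSum_geometric_of_lt_one (hpow k).1.le (hpow k).2).mul_left
      (((k : ℝ) + 1) * t ^ (k + 1)))
    rw [div_eq_mul_inv]
    refine h.congr_fun fun l => ?_
    simp only [a, ← pow_mul]
    ring_nf
  have hsum : Summable (Function.uncurry a) := by
    refine (summable_prod_of_nonneg fun p => ?_).2 ⟨fun l => (hinner l).summable, ?_⟩
    · have := ht.1.le
      simp only [Function.uncurry, a, Pi.zero_apply]
      positivity
    · exact (summable_abs_kappaTerm 0 ht).of_abs.congr fun l => (hinner l).tsum_eq.symm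
  calc kappa1 t = ∑' k, ∑' l, a l k := tsum_congr fun k => (houter k).tsum_eq.symm
    _ = ∑' l, ∑' k, a l k := hsum.tsum_comm
    _ = ∑' l, kappaTerm 0 l t := tsum_congr fun l => (hinner l).tsum_eq

theorem kappa_succ_eq_tsum_kappaTerm (n : ℕ) {t : ℝ} (ht : t ∈ Ioo 0 1) :
    kappa (n + 1) t = ∑' l, kappaTerm n l t := by
  induction n generalizing t with
  | zero => exact kappa1_eq_tsum_kappaTerm ht
  | succ n ih =>
    have hloc : kappa (n + 1) =ᶠ[𝓝 t] fun s => ∑' l, kappaTerm n l s :=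
      eventually_of_mem (isOpen_Ioo.mem_nhds ht) fun s hs => ih hs
    calc kappa (n + 2) t = t * deriv (kappa (n + 1)) t := rfl
      _ = t * ∑' l, kappaTerm (n + 1) l t / t := by
        rw [hloc.deriv_eq, (hasDerivAt_tsum_kappaTerm n ht).deriv]
      _ = ∑' l, kappaTerm (n + 1) l t := by
        rw [← tsum_mul_left]
        exact tsum_congr fun l => mul_div_cancel₀ _ ht.1.ne'

/-- `κ_j(t) = ∑_{ℓ≥1} ℓ^{j−1} A_j(t^ℓ)/(1−t^ℓ)^{j+1}`, absolutely convergent. -/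
theorem stmt16 (j : ℕ) (hj : 1 ≤ j) (t : ℝ) (ht : t ∈ Set.Ioo (0 : ℝ) 1) :
    kappa j t =
        ∑' l : ℕ, ((l : ℝ) + 1) ^ (j - 1) * (eulerianPoly j).eval (t ^ (l + 1)) /
          (1 - t ^ (l + 1)) ^ (j + 1) ∧
      Summable (fun l : ℕ =>
        |((l : ℝ) + 1) ^ (j - 1) * (eulerianPoly j).eval (t ^ (l + 1)) /
          (1 - t ^ (l + 1)) ^ (j + 1)|) := by
  obtain ⟨n, rfl⟩ := Nat.exists_eq_add_of_le' hj
  simp only [Nat.add_sub_cancel, mul_div_assoc]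
  exact ⟨kappa_succ_eq_tsum_kappaTerm n ht, summable_abs_kappaTerm n ht⟩
end

section
/- For every integer j ≥ 2 and every t ∈ (0,1), κ_j(t) = Σ_{ℓ≥1} ℓ^j · A_{j−1}(t^ℓ) / (1 − t^ℓ)^j, and this series converges absolutely. -/
/-!
Write `q = t^(l+1)`. On a term `(l+1)^k P(q)/(1-q)^k` the operator `t d/dt` acts as
`(l+1) q d/dq`, and `q d/dq (P(q)/(1-q)^k) = Q(q)/(1-q)^(k+1)` with `Q = X((1-X)P' + kP)`,
which is exactly the recurrence of the Eulerian polynomials. The terms of `κ₁` are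
`(l+1) q/(1-q)`, i.e. `P = A₁ = X`, so termwise differentiation gives the formula for every
`κ_j` by induction. Termwise differentiation is justified on `|t| < b < 1` by the geometric
bound `(l+1)^(k+1) b^l` on the differentiated terms; since `X ∣ P`, the series vanishes at `0`.
-/

open Real

open Polynomial Set

noncomputable section

def evalDivOneSubPow (P : ℝ[X]) (k : ℕ) (q : ℝ) : ℝ :=
  P.eval q / (1 - q) ^ k

def derivNumerator (k : ℕ) (P : ℝ[X]) : ℝ[X] :=
  derivative P * (1 - X) + (k : ℝ) • P

theorem hasDerivAt_evalDivOneSubPow (P : ℝ[X]) (k : ℕ) {q : ℝ} (hq : q ≠ 1) :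
    HasDerivAt (evalDivOneSubPow P k) (evalDivOneSubPow (derivNumerator k P) (k + 1) q) q := by
  have hq' : 1 - q ≠ 0 := sub_ne_zero.mpr hq.symm
  have hden : HasDerivAt (fun q : ℝ => (1 - q) ^ k) (k * (1 - q) ^ (k - 1) * -1) q := by
    simpa using ((hasDerivAt_id q).const_sub 1).fun_pow k
  refine ((P.hasDerivAt q).div hden (pow_ne_zero k hq')).congr_deriv ?_
  simp only [evalDivOneSubPow, derivNumerator, eval_add, eval_mul, eval_sub, eval_one, eval_X,
    eval_smul, smul_eq_mul]
  rcases k with _ | k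
  · simp [hq']
  · field_simp
    push_cast
    ring

theorem evalDivOneSubPow_X_mul (R : ℝ[X]) (k : ℕ) (q : ℝ) :
    evalDivOneSubPow (X * R) k q = q * evalDivOneSubPow R k q := by
  simp [evalDivOneSubPow, mul_div_assoc]

theorem exists_bound_evalDivOneSubPow (P : ℝ[X]) (k : ℕ) {b : ℝ} (hb : b < 1) :
    ∃ C, ∀ q ∈ Icc (-b) b, |evalDivOneSubPow P k q| ≤ C := by
  have hcont : ContinuousOn (evalDivOneSubPow P k) (Icc (-b) b) := by
    refine P.continuous.continuousOn.div (by fun_prop) fun q hq => pow_ne_zero k ?_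
    linarith [hq.2]
  simpa using isCompact_Icc.exists_bound_of_continuousOn hcont

theorem pow_succ_mem_Icc {x b : ℝ} (hx : |x| ≤ b) (hb : b ≤ 1) (l : ℕ) :
    x ^ (l + 1) ∈ Icc (-b) b := by
  rw [mem_Icc, ← abs_le, abs_pow]
  calc |x| ^ (l + 1) ≤ b ^ (l + 1) := pow_le_pow_left₀ (abs_nonneg x) hx _
    _ ≤ b ^ 1 := pow_le_pow_of_le_one ((abs_nonneg x).trans hx) hb (by omega)
    _ = b := pow_one b

theorem summable_succ_pow_mul_pow_succ (k : ℕ) {r : ℝ} (hr : |r| < 1) :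
    Summable fun l : ℕ => ((l : ℝ) + 1) ^ k * r ^ (l + 1) := by
  refine ((summable_nat_add_iff 1).mpr
    (summable_pow_mul_geometric_of_norm_lt_one k (r := r) hr)).congr fun l => ?_
  push_cast
  rfl

def lambertSeries (P : ℝ[X]) (k : ℕ) (x : ℝ) : ℝ :=
  ∑' l : ℕ, ((l : ℝ) + 1) ^ k * evalDivOneSubPow P k (x ^ (l + 1))

variable {P : ℝ[X]} {k : ℕ} {x : ℝ}

theorem summable_abs_lambertSeries_term (hP : X ∣ P) (hx : |x| < 1) :
    Summable fun l : ℕ => |((l : ℝ) + 1) ^ k * evalDivOneSubPow P k (x ^ (l + 1))| := by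
  obtain ⟨R, rfl⟩ := hP
  obtain ⟨C, hC⟩ := exists_bound_evalDivOneSubPow R k hx
  refine .of_nonneg_of_le (fun _ => abs_nonneg _) (fun l => ?_)
    ((summable_succ_pow_mul_pow_succ k (r := |x|) (by rwa [abs_abs])).mul_left C)
  have hR := hC _ (pow_succ_mem_Icc le_rfl hx.le l)
  rw [evalDivOneSubPow_X_mul, abs_mul, abs_mul, abs_pow, abs_pow, abs_of_nonneg (by positivity)]
  calc ((l : ℝ) + 1) ^ k * (|x| ^ (l + 1) * |evalDivOneSubPow R k (x ^ (l + 1))|)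
      ≤ ((l : ℝ) + 1) ^ k * (|x| ^ (l + 1) * C) := by gcongr
    _ = C * (((l : ℝ) + 1) ^ k * |x| ^ (l + 1)) := by ring

theorem hasDerivAt_lambertSeries (hP : X ∣ P) (hx : |x| < 1) :
    HasDerivAt (lambertSeries P k)
      (∑' l : ℕ, ((l : ℝ) + 1) ^ (k + 1) * x ^ l *
        evalDivOneSubPow (derivNumerator k P) (k + 1) (x ^ (l + 1))) x := by
  obtain ⟨b, hxb, hb1⟩ := exists_between hx
  have hb0 : 0 < b := (abs_nonneg x).trans_lt hxb
  obtain ⟨C, hC⟩ := exists_bound_evalDivOneSubPow (derivNumerator k P) (k + 1) hb1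
  have hu : Summable fun l : ℕ => C * b⁻¹ * (((l : ℝ) + 1) ^ (k + 1) * b ^ (l + 1)) :=
    (summable_succ_pow_mul_pow_succ (k + 1) (r := b) (by rwa [abs_of_pos hb0])).mul_left _
  unfold lambertSeries
  refine hasDerivAt_tsum_of_isPreconnected (𝕜 := ℝ)
    (g' := fun (l : ℕ) y => ((l : ℝ) + 1) ^ (k + 1) * y ^ l *
      evalDivOneSubPow (derivNumerator k P) (k + 1) (y ^ (l + 1)))
    hu isOpen_Ioo isPreconnected_Ioo
    (fun l y hy => ?_) (fun l y hy => ?_) ⟨neg_lt_zero.mpr hb0, hb0⟩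
    ?_ (abs_lt.mp hxb)
  · have hq : y ^ (l + 1) ≠ 1 := by
      have := (pow_succ_mem_Icc (abs_lt.mpr hy).le hb1.le l).2
      linarith
    refine (((hasDerivAt_evalDivOneSubPow P k hq).comp (h := fun y : ℝ => y ^ (l + 1)) y
      (hasDerivAt_pow (l + 1) y)).const_mul (((l : ℝ) + 1) ^ k)).congr_deriv ?_
    push_cast
    ring
  · have hyb : |y| ≤ b := (abs_lt.mpr hy).le
    have hD := hC _ (pow_succ_mem_Icc hyb hb1.le l)
    rw [Real.norm_eq_abs, abs_mul, abs_mul, abs_pow, abs_pow, abs_of_nonneg (by positivity)]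
    calc ((l : ℝ) + 1) ^ (k + 1) * |y| ^ l *
          |evalDivOneSubPow (derivNumerator k P) (k + 1) (y ^ (l + 1))|
        ≤ ((l : ℝ) + 1) ^ (k + 1) * b ^ l * C := by gcongr
      _ = C * b⁻¹ * (((l : ℝ) + 1) ^ (k + 1) * b ^ (l + 1)) := by field_simp; ring
  · obtain ⟨R, rfl⟩ := hP
    simp [evalDivOneSubPow_X_mul]

theorem mul_deriv_lambertSeries (hP : X ∣ P) (hx : |x| < 1) :
    x * deriv (lambertSeries P k) x = lambertSeries (X * derivNumerator k P) (k + 1) x := by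
  rw [(hasDerivAt_lambertSeries hP hx).deriv, lambertSeries, ← tsum_mul_left]
  congr 1 with l
  rw [evalDivOneSubPow_X_mul]
  ring

theorem eulerianPoly_succ (j : ℕ) :
    eulerianPoly (j + 1) = X * derivNumerator (j + 1) (eulerianPoly j) := by
  rw [eulerianPoly, derivNumerator]
  push_cast
  rw [mul_add, mul_smul_comm]
  ring

theorem X_dvd_eulerianPoly_succ (j : ℕ) : X ∣ eulerianPoly (j + 1) :=
  eulerianPoly_succ j ▸ dvd_mul_right _ _

theorem kappa_one : kappa 1 = lambertSeries X 1 := by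
  funext t
  simp [kappa, kappa1, lambertSeries, evalDivOneSubPow, mul_div_assoc]

theorem eqOn_kappa_add_two_of_eqOn {m : ℕ} (hP : X ∣ P)
    (h : EqOn (kappa (m + 1)) (lambertSeries P (m + 1)) (Ioo (-1) 1)) :
    EqOn (kappa (m + 2)) (lambertSeries (X * derivNumerator (m + 1) P) (m + 2)) (Ioo (-1) 1) := by
  intro t ht
  have hloc : kappa (m + 1) =ᶠ[nhds t] lambertSeries P (m + 1) :=
    Filter.eventually_of_mem (isOpen_Ioo.mem_nhds ht) h
  show t * deriv (kappa (m + 1)) t = _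
  rw [hloc.deriv_eq]
  exact mul_deriv_lambertSeries hP (abs_lt.mpr ht)

theorem eqOn_kappa_lambertSeries (n : ℕ) :
    EqOn (kappa (n + 2)) (lambertSeries (eulerianPoly (n + 1)) (n + 2)) (Ioo (-1) 1) := by
  induction n with
  | zero =>
    have h := eqOn_kappa_add_two_of_eqOn (m := 0) dvd_rfl (kappa_one ▸ eqOn_refl _ _)
    rwa [show X * derivNumerator 1 X = eulerianPoly 1 by simp [eulerianPoly, derivNumerator]] at h
  | succ n ih =>
    rw [eulerianPoly_succ]
    exact eqOn_kappa_add_two_of_eqOn (X_dvd_eulerianPoly_succ n) ih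

end

/-- `κ_j(t) = ∑_{ℓ≥1} ℓ^j A_{j−1}(t^ℓ)/(1−t^ℓ)^j` for `j ≥ 2`, absolutely convergent. -/
theorem stmt17 (j : ℕ) (hj : 2 ≤ j) (t : ℝ) (ht : t ∈ Set.Ioo (0 : ℝ) 1) :
    kappa j t =
        ∑' l : ℕ, ((l : ℝ) + 1) ^ j * (eulerianPoly (j - 1)).eval (t ^ (l + 1)) /
          (1 - t ^ (l + 1)) ^ j ∧
      Summable (fun l : ℕ =>
        |((l : ℝ) + 1) ^ j * (eulerianPoly (j - 1)).eval (t ^ (l + 1)) /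
          (1 - t ^ (l + 1)) ^ j|) := by
  obtain ⟨n, rfl⟩ : ∃ n, j = n + 2 := ⟨j - 2, by omega⟩
  have ht' : t ∈ Ioo (-1) 1 := ⟨by linarith [ht.1], ht.2⟩
  simp only [mul_div_assoc]
  exact ⟨eqOn_kappa_lambertSeries n ht',
    summable_abs_lambertSeries_term (X_dvd_eulerianPoly_succ n) (abs_lt.mpr ht')⟩
end

section
/- For every t ∈ (0,1), every a ∈ (0,1), and every real y with a(1−t) < |y| < π: |f(t·e^{iy})| / f(t) ≤ exp( −2t(t+1) / ((1−t)·(π²/a² + 4t)) ). -/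
/-!
Each factor obeys `log (1 - |u|) + (|u| - Re u) ≤ log |1 - u|` for `|u| < 1`: the Taylor series of
`-log (1 - |u|)` dominates that of `-Re log (1 - u)` termwise, and we keep only the first term.
Summing over `u = z^j` gives `|f(z)| / f(|z|) ≤ exp (Re (z/(1-z)) - |z|/(1-|z|))`. For
`z = t e^{iy}` this exponent is `-(1+t) t (1 - cos y) / ((1-t) |1-z|²)`, and
`1 - cos y ≥ 2y²/π²` together with `|y| > a(1-t)` bounds it by the claimed one.
-/

open Real

/-- Euler's generating function `f(t) = ∏_{j≥1} 1/(1−t^j)`. -/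
noncomputable def partitionGF (t : ℝ) : ℝ := ∏' j : ℕ, 1 / (1 - t ^ (j + 1))

/-- Euler's generating function on the complex unit disc. -/
noncomputable def partitionGFC (z : ℂ) : ℂ := ∏' j : ℕ, 1 / (1 - z ^ (j + 1))

section NormedField

variable {𝕜 : Type*} [NormedField 𝕜] {z : 𝕜}

lemma norm_pow_succ_lt_one (hz : ‖z‖ < 1) (j : ℕ) : ‖z ^ (j + 1)‖ < 1 := by
  rw [norm_pow]
  exact pow_lt_one₀ (norm_nonneg z) hz j.succ_ne_zero

lemma one_sub_pow_succ_ne_zero (hz : ‖z‖ < 1) (j : ℕ) : 1 - z ^ (j + 1) ≠ 0 := by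
  intro h
  have := norm_pow_succ_lt_one hz j
  rw [← sub_eq_zero.mp h, norm_one] at this
  exact this.false

lemma hasSum_pow_succ [CompleteSpace 𝕜] (hz : ‖z‖ < 1) :
    HasSum (fun j : ℕ ↦ z ^ (j + 1)) (z / (1 - z)) := by
  simpa only [pow_succ', div_eq_mul_inv] using (hasSum_geometric_of_norm_lt_one hz).mul_left z

lemma summable_norm_neg_pow_succ (hz : ‖z‖ < 1) : Summable fun j : ℕ ↦ ‖-z ^ (j + 1)‖ := by
  simpa only [norm_neg, norm_pow] using
    (hasSum_pow_succ (𝕜 := ℝ) (z := ‖z‖) (by simpa using hz)).summable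

lemma summable_log_norm_one_sub_pow_succ (hz : ‖z‖ < 1) :
    Summable fun j : ℕ ↦ Real.log ‖1 - z ^ (j + 1)‖ := by
  simpa only [← sub_eq_add_neg] using (summable_norm_neg_pow_succ hz).summable_log_norm_one_add

lemma norm_tprod_one_div_one_sub_pow_succ [CompleteSpace 𝕜] (hz : ‖z‖ < 1) :
    ‖∏' j : ℕ, 1 / (1 - z ^ (j + 1))‖ = Real.exp (-∑' j : ℕ, Real.log ‖1 - z ^ (j + 1)‖) := by
  have hs := summable_norm_neg_pow_succ hz
  have hfac (j : ℕ) : 1 + -z ^ (j + 1) ≠ 0 := by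
    simpa only [← sub_eq_add_neg] using one_sub_pow_succ_ne_zero hz j
  have hmul : Multipliable fun j : ℕ ↦ 1 - z ^ (j + 1) := by
    simpa only [← sub_eq_add_neg] using multipliable_one_add_of_summable hs
  have hne : ∏' j : ℕ, (1 - z ^ (j + 1)) ≠ 0 := by
    simpa only [← sub_eq_add_neg] using tprod_one_add_ne_zero_of_summable hfac hs
  simp only [one_div]
  rw [hmul.tprod_inv₀ hne, norm_inv, hmul.norm_tprod, Real.exp_neg,
    Real.rexp_tsum_eq_tprod (fun j ↦ norm_pos_iff.mpr (one_sub_pow_succ_ne_zero hz j))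
      (summable_log_norm_one_sub_pow_succ hz)]

end NormedField

lemma Complex.norm_sub_re_le_log_norm_one_sub_sub_log {u : ℂ} (hu : ‖u‖ < 1) :
    ‖u‖ - u.re ≤ Real.log ‖1 - u‖ - Real.log (1 - ‖u‖) := by
  have hre : HasSum (fun n : ℕ ↦ (u ^ (n + 1) / (n + 1)).re) (-Real.log ‖1 - u‖) := by
    simpa [Complex.log_re] using Complex.hasSum_re (Complex.hasSum_taylorSeries_neg_log' hu)
  have hnorm : HasSum (fun n : ℕ ↦ ‖u‖ ^ (n + 1) / (n + 1)) (-Real.log (1 - ‖u‖)) :=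
    Real.hasSum_pow_div_log_of_abs_lt_one (by rwa [abs_norm])
  have hterm (n : ℕ) : 0 ≤ ‖u‖ ^ (n + 1) / (n + 1) - (u ^ (n + 1) / (n + 1)).re := by
    have := Complex.re_le_norm (u ^ (n + 1) / (n + 1))
    rw [norm_div, norm_pow, ← Nat.cast_succ, Complex.norm_natCast] at this
    push_cast at this
    linarith
  have := le_hasSum (hnorm.sub hre) 0 fun n _ ↦ hterm n
  simp only [zero_add, pow_one, Nat.cast_zero, div_one] at this
  linarith

theorem norm_partitionGFC_div_partitionGF_norm_le {z : ℂ} (hz : ‖z‖ < 1) :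
    ‖partitionGFC z‖ / partitionGF ‖z‖ ≤ Real.exp ((z / (1 - z)).re - ‖z‖ / (1 - ‖z‖)) := by
  have hz' : ‖‖z‖‖ < 1 := by rwa [norm_norm]
  have hfac (j : ℕ) : 0 ≤ 1 / (1 - ‖z‖ ^ (j + 1)) := by
    have := norm_pow_succ_lt_one hz' j
    rw [norm_pow, norm_norm] at this
    exact one_div_nonneg.mpr (sub_nonneg.mpr this.le)
  have hgeom : HasSum (fun j : ℕ ↦ ‖z ^ (j + 1)‖ - (z ^ (j + 1)).re)
      (‖z‖ / (1 - ‖z‖) - (z / (1 - z)).re) := by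
    simpa only [norm_pow] using (hasSum_pow_succ hz').sub (Complex.hasSum_re (hasSum_pow_succ hz))
  have hlog (j : ℕ) : ‖z ^ (j + 1)‖ - (z ^ (j + 1)).re ≤
      Real.log ‖1 - z ^ (j + 1)‖ - Real.log ‖1 - ‖z‖ ^ (j + 1)‖ := by
    have := Complex.norm_sub_re_le_log_norm_one_sub_sub_log (norm_pow_succ_lt_one hz j)
    rwa [Real.norm_eq_abs, Real.log_abs, ← norm_pow]
  have hsum := hasSum_le hlog hgeom
    ((summable_log_norm_one_sub_pow_succ hz).hasSum.sub
      (summable_log_norm_one_sub_pow_succ hz').hasSum)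
  rw [partitionGFC, partitionGF, ← Real.norm_of_nonneg (tprod_nonneg hfac),
    norm_tprod_one_div_one_sub_pow_succ hz, norm_tprod_one_div_one_sub_pow_succ hz',
    ← Real.exp_sub, Real.exp_le_exp]
  linarith

lemma Complex.norm_div_one_sub_norm_sub_re_div_one_sub {z : ℂ} (hz : ‖z‖ < 1) :
    ‖z‖ / (1 - ‖z‖) - (z / (1 - z)).re =
      (1 + ‖z‖) * (‖z‖ - z.re) / ((1 - ‖z‖) * ((1 - ‖z‖) ^ 2 + 2 * (‖z‖ - z.re))) := by
  have hsq : ‖z‖ ^ 2 = z.re ^ 2 + z.im ^ 2 := by rw [Complex.sq_norm, Complex.normSq_apply]; ring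
  have hnormSq : Complex.normSq (1 - z) = (1 - ‖z‖) ^ 2 + 2 * (‖z‖ - z.re) := by
    simp only [Complex.normSq_apply, Complex.sub_re, Complex.one_re, Complex.sub_im,
      Complex.one_im]
    linear_combination -hsq
  have hpos : 0 < (1 - ‖z‖) ^ 2 + 2 * (‖z‖ - z.re) := by
    nlinarith [Complex.re_le_norm z, norm_nonneg z]
  have hr : 1 - ‖z‖ ≠ 0 := by linarith
  rw [Complex.div_re, hnormSq]
  simp only [Complex.sub_re, Complex.one_re, Complex.sub_im, Complex.one_im]
  field_simp
  linear_combination (‖z‖ - 1) * hsq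

lemma Real.two_mul_sq_le_pi_sq_mul_one_sub_cos {y : ℝ} (hy : |y| ≤ π) :
    2 * y ^ 2 ≤ π ^ 2 * (1 - Real.cos y) :=
  calc 2 * y ^ 2 = π ^ 2 * (2 / π ^ 2 * y ^ 2) := by field_simp
    _ ≤ π ^ 2 * (1 - Real.cos y) := by
      gcongr
      linarith [Real.cos_le_one_sub_mul_cos_sq hy]

/-- Estimate for `|f(t·e^{iy})|/f(t)` when `a(1−t) < |y| < π`. -/
theorem stmt19 (t a : ℝ) (ht : t ∈ Set.Ioo (0 : ℝ) 1) (ha : a ∈ Set.Ioo (0 : ℝ) 1)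
    (y : ℝ) (hy1 : a * (1 - t) < |y|) (hy2 : |y| < Real.pi) :
    ‖partitionGFC ((t : ℂ) * Complex.exp (Complex.I * (y : ℂ)))‖ / partitionGF t ≤
      Real.exp (-(2 * t * (t + 1)) / ((1 - t) * (Real.pi ^ 2 / a ^ 2 + 4 * t))) := by
  obtain ⟨ht0, ht1⟩ := ht
  set z : ℂ := t * Complex.exp (Complex.I * y) with hz
  have hnorm : ‖z‖ = t := by simp [z, Complex.norm_exp_I_mul_ofReal, ht0.le]
  have hre : z.re = t * Real.cos y := by
    rw [hz, mul_comm Complex.I, Complex.re_ofReal_mul, Complex.exp_ofReal_mul_I_re]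
  have hcos : 2 * (1 - t) ^ 2 ≤ π ^ 2 / a ^ 2 * (1 - Real.cos y) := by
    have hy : (a * (1 - t)) ^ 2 ≤ y ^ 2 := by
      rw [← sq_abs y]
      exact pow_le_pow_left₀ (mul_pos ha.1 (sub_pos.2 ht1)).le hy1.le 2
    rw [div_mul_eq_mul_div, le_div_iff₀ (pow_pos ha.1 2)]
    nlinarith [Real.two_mul_sq_le_pi_sq_mul_one_sub_cos hy2.le]
  have hz1 : ‖z‖ < 1 := hnorm ▸ ht1
  have hd : 0 ≤ t - t * Real.cos y := by nlinarith [Real.cos_le_one y]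
  have key := norm_partitionGFC_div_partitionGF_norm_le hz1
  rw [← neg_sub, Complex.norm_div_one_sub_norm_sub_re_div_one_sub hz1, hnorm, hre] at key
  refine key.trans (Real.exp_le_exp.mpr ?_)
  rw [neg_div, neg_le_neg_iff, div_le_div_iff₀ (by positivity) (by positivity)]
  nlinarith [mul_le_mul_of_nonneg_left hcos (by positivity : 0 ≤ t * (1 + t) * (1 - t))]
end
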